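/- For every integer N ≥ 2, the polynomial X^{2N−1} + μ^N mq·X^{N−1} + μ^{2N−1}q² is irreducible in ℂ(μ,m,q)[X], where ℂ(μ,m,q) is the field of rational functions in three independent indeterminates μ, m, q over ℂ. -/

import Mathlib

/-!
Specialising `μ = q = 1` sends the polynomial over `ℂ[μ, m, q]` to `X^(2N-1) + m X^(N-1) + 1` over
`ℂ[m]`. Read with `m` as the variable, the latter is linear, `X^(N-1) m + (X^(2N-1) + 1)`, with
coprime coefficients in `ℂ[X]`, hence irreducible. A monic polynomial with an irreducible
specialisation is irreducible, and Gauss's lemma carries irreducibility to `ℂ(μ, m, q)`.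
-/

open Polynomial Polynomial.Bivariate

theorem isCoprime_X_X_pow_add_one {R : Type*} [CommRing R] {n : ℕ} (hn : 0 < n) :
    IsCoprime (X : R[X]) (X ^ n + 1) :=
  ⟨-X ^ (n - 1), 1, by rw [neg_mul, ← pow_succ, Nat.sub_add_cancel hn]; ring⟩

theorem irreducible_X_pow_add_C_X_mul_X_pow_add_one {R : Type*} [CommRing R] [IsDomain R]
    {a b : ℕ} (hb : 0 < b) : Irreducible (Y ^ b + C X * Y ^ a + 1 : R[X][Y]) := by
  have hswap : Bivariate.swap (Y ^ b + C X * Y ^ a + 1 : R[X][Y]) =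
      C (X ^ a) * Y + C (X ^ b + 1) := by
    simp only [map_add, map_mul, map_pow, map_one, Bivariate.swap_X, Bivariate.swap_Y]
    ring
  rw [← MulEquiv.irreducible_iff Bivariate.swap, hswap]
  exact irreducible_C_mul_X_add_C (pow_ne_zero _ X_ne_zero)
    (isCoprime_X_X_pow_add_one hb).pow_left.isRelPrime

section GlueballPoly

variable {R : Type*} [CommRing R]

noncomputable def glueballPoly (N : ℕ) (μ m q : R) : R[X] :=
  X ^ (2 * N - 1) + C (μ ^ N * m * q) * X ^ (N - 1) + C (μ ^ (2 * N - 1) * q ^ 2)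

theorem glueballPoly_map {S : Type*} [CommRing S] (f : R →+* S) (N : ℕ) (μ m q : R) :
    (glueballPoly N μ m q).map f = glueballPoly N (f μ) (f m) (f q) := by
  simp [glueballPoly]

theorem glueballPoly_monic [Nontrivial R] {N : ℕ} (hN : 1 ≤ N) (μ m q : R) :
    (glueballPoly N μ m q).Monic := by
  unfold glueballPoly
  rw [add_assoc]
  apply monic_X_pow_add
  compute_degree!
  rw [Nat.cast_withBot]
  exact WithBot.coe_lt_coe.mpr (by omega)

end GlueballPoly

/-- For every `N ≥ 2`, the characteristic polynomial
`X^(2N-1) + μ^N mq·X^(N-1) + μ^(2N-1) q²` of the glueball operator in the U(N)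
theory with one fundamental flavor is irreducible over the field `ℂ(μ,m,q)` of
rational functions in three independent indeterminates over `ℂ`. -/
theorem glueball_poly_irreducible_UN (N : ℕ) (hN : 2 ≤ N) :
    let R := MvPolynomial (Fin 3) ℂ
    let K := FractionRing R
    let μ : K := algebraMap R K (MvPolynomial.X 0)
    let m : K := algebraMap R K (MvPolynomial.X 1)
    let q : K := algebraMap R K (MvPolynomial.X 2)
    Irreducible (Polynomial.X ^ (2 * N - 1)
      + Polynomial.C (μ ^ N * m * q) * Polynomial.X ^ (N - 1)
      + Polynomial.C (μ ^ (2 * N - 1) * q ^ 2) : Polynomial K) := by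
  intro R K μ m q
  let P := glueballPoly N (MvPolynomial.X 0 : MvPolynomial (Fin 3) ℂ) (MvPolynomial.X 1)
    (MvPolynomial.X 2)
  have hmonic : P.Monic := glueballPoly_monic (by omega) _ _ _
  let φ : MvPolynomial (Fin 3) ℂ →+* ℂ[X] := (MvPolynomial.aeval ![1, X, 1]).toRingHom
  have hspec : P.map φ = Y ^ (2 * N - 1) + C X * Y ^ (N - 1) + 1 := by
    simp only [P, glueballPoly_map]
    simp [φ, glueballPoly]
  have hirr : Irreducible P := hmonic.irreducible_of_irreducible_map φ P (by
    rw [hspec]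
    exact irreducible_X_pow_add_C_X_mul_X_pow_add_one (by omega))
  have hirrK := (hmonic.irreducible_iff_irreducible_map_fraction_map (K := K)).mp hirr
  rwa [glueballPoly_map] at hirrK
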